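/- arXiv:2403.15707 — 4 statements merged into one kernel-verified Lean document; each statement's English description precedes it below -/
import Mathlib

section
/- Let N ≥ 2 and let D be an integer with 1 ≤ D < N. Equip {0,1}^N with the Hamming distance δ, and let H_D = {x ∈ {0,1}^N : δ(0,x) = D}. For every α, β ∈ (0,1) with D ≤ αβN, there exists a subset Θ ⊆ H_D such that δ(θ, θ') > 2(1−α)D for all distinct θ, θ' ∈ Θ, and ln|Θ| ≥ ρ D ln(N/D), where ρ = α(−ln β + β − 1)/(−ln(αβ)). -/
/-!
Identify `{0,1}^N` with the subsets of `Fin N`; on the sphere `H_D` the Hamming distance is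
`2D - 2|A ∩ B|`. A maximal family `Θ` of `D`-sets with pairwise intersections smaller than `αD`
dominates: every `D`-set meets some `θ ∈ Θ` in at least `αD` points. For fixed `θ`, the size of
`B ∩ θ` for a uniform `D`-set `B` is hypergeometric, and its moment generating function is at most
the binomial one, `(1 + (t - 1) D / N)^D`. Chernoff's bound with `t = αN/D` then gives
`log |Θ| ≥ D (α log (αN/D) - α + D/N)`. As a function of `L = log (N/D)` this lower bound is
convex, agrees with `ρ D L` at `L = -log (αβ)` and has slope at least `α (1 - β) D ≥ ρ D` there.
-/

open Finset Real

namespace Finset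

variable {α : Type*} [DecidableEq α]

theorem exists_subset_pairwise_not_rel_and_dominating (s : Finset α) {r : α → α → Prop}
    (hrefl : ∀ x ∈ s, r x x) (hsymm : ∀ x y, r x y → r y x) :
    ∃ T ⊆ s, (T : Set α).Pairwise (fun x y => ¬ r x y) ∧ ∀ x ∈ s, ∃ y ∈ T, r x y := by
  classical
  obtain ⟨T, hT, hmax⟩ :=
    (s.powerset.filter fun T : Finset α => (T : Set α).Pairwise (fun x y => ¬ r x y)).exists_maximal
      ⟨∅, by simp⟩
  simp only [mem_filter, mem_powerset] at hT hmax
  refine ⟨T, hT.1, hT.2, fun x hx => ?_⟩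
  by_contra! hfar
  have hinsert : insert x T ⊆ T := by
    refine hmax ⟨insert_subset hx hT.1, ?_⟩ (subset_insert x T)
    rw [coe_insert, Set.pairwise_insert]
    exact ⟨hT.2, fun y hy _ => ⟨hfar y hy, fun h => hfar y hy (hsymm y x h)⟩⟩
  exact hfar x (hinsert (mem_insert_self x T)) (hrefl x hx)

theorem succ_nsmul_sum_powersetCard_succ {M : Type*} [AddCommMonoid M] (s : Finset α) (n : ℕ)
    (f : Finset α → M) :
    (n + 1) • ∑ B ∈ s.powersetCard (n + 1), f B
      = ∑ B ∈ s.powersetCard n, ∑ x ∈ s \ B, f (insert x B) := by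
  have hcard : (n + 1) • ∑ B ∈ s.powersetCard (n + 1), f B
      = ∑ B ∈ s.powersetCard (n + 1), ∑ _x ∈ B, f B := by
    rw [smul_sum]
    refine sum_congr rfl fun B hB => ?_
    rw [sum_const, (mem_powersetCard.mp hB).2]
  rw [hcard, sum_sigma', sum_sigma']
  refine sum_nbij' (fun p => ⟨p.1.erase p.2, p.2⟩) (fun p => ⟨insert p.2 p.1, p.2⟩)
    ?_ ?_ ?_ ?_ ?_
  · rintro ⟨B, x⟩ hp
    simp only [mem_sigma, mem_powersetCard] at hp ⊢
    refine ⟨⟨(erase_subset x B).trans hp.1.1, by rw [card_erase_of_mem hp.2, hp.1.2]; rfl⟩, ?_⟩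
    exact mem_sdiff.mpr ⟨hp.1.1 hp.2, notMem_erase x B⟩
  · rintro ⟨B, x⟩ hp
    simp only [mem_sigma, mem_powersetCard, mem_sdiff] at hp ⊢
    exact ⟨⟨insert_subset hp.2.1 hp.1.1, by rw [card_insert_of_notMem hp.2.2, hp.1.2]⟩,
      mem_insert_self x B⟩
  · rintro ⟨B, x⟩ hp
    simp only [mem_sigma] at hp
    simp [insert_erase hp.2]
  · rintro ⟨B, x⟩ hp
    simp only [mem_sigma, mem_sdiff] at hp
    simp [erase_insert hp.2.2]
  · rintro ⟨B, x⟩ hp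
    simp only [mem_sigma] at hp
    simp [insert_erase hp.2]

theorem card_filter_notMem_powersetCard (s : Finset α) (n : ℕ) (x : α) :
    #{B ∈ s.powersetCard n | x ∉ B} = (#(s.erase x)).choose n := by
  rw [← card_powersetCard]
  congr 1
  ext B
  simp only [mem_filter, mem_powersetCard, subset_erase]
  tauto

theorem sum_powersetCard_sum_sdiff {M : Type*} [AddCommMonoid M] (s : Finset α) (n : ℕ)
    (w : α → M) :
    ∑ B ∈ s.powersetCard n, ∑ x ∈ s \ B, w x = (#s - 1).choose n • ∑ x ∈ s, w x := by
  simp_rw [sdiff_eq_filter, sum_filter]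
  rw [sum_comm, smul_sum]
  refine sum_congr rfl fun x hx => ?_
  rw [← sum_filter, sum_const, card_filter_notMem_powersetCard, card_erase_of_mem hx]

end Finset

namespace GilbertVarshamov

section Weight

variable {α : Type*} [DecidableEq α] (S : Finset α) (t : ℝ)

def weight (x : α) : ℝ := if x ∈ S then t else 1

theorem prod_weight (B : Finset α) : ∏ x ∈ B, weight S t x = t ^ #(B ∩ S) := by
  simp only [weight, prod_ite_mem, prod_const]

theorem sum_weight (B : Finset α) :
    ∑ x ∈ B, weight S t x = #B + (t - 1) * #(B ∩ S) := by
  have h (x : α) : weight S t x = 1 + if x ∈ S then t - 1 else 0 := by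
    unfold weight; split_ifs <;> ring
  simp_rw [h, sum_add_distrib, sum_ite_mem, sum_const, nsmul_eq_mul, mul_one]
  ring

variable [Fintype α]

theorem succ_mul_sum_pow_card_inter (n : ℕ) :
    (n + 1) * ∑ B ∈ powersetCard (n + 1) univ, t ^ #(B ∩ S)
      = ∑ B ∈ powersetCard n univ, t ^ #(B ∩ S) * ∑ x ∈ univ \ B, weight S t x := by
  have h := succ_nsmul_sum_powersetCard_succ univ n fun B => ∏ x ∈ B, weight S t x
  rw [nsmul_eq_mul] at h
  push_cast at h
  simp_rw [← prod_weight, h, mul_sum]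
  refine sum_congr rfl fun B _ => sum_congr rfl fun x hx => ?_
  rw [prod_insert (mem_sdiff.mp hx).2, mul_comm]

theorem sum_compl_weight {n : ℕ} {B : Finset α} (hB : B ∈ powersetCard n univ) :
    ∑ x ∈ univ \ B, weight S t x
      = Fintype.card α + (t - 1) * #S - (n + (t - 1) * #(B ∩ S)) := by
  rw [sum_sdiff_eq_sub (subset_univ B), sum_weight, sum_weight, univ_inter, card_univ,
    (mem_powersetCard.mp hB).2]

theorem sum_powersetCard_sum_compl_weight (n : ℕ) :
    ∑ B ∈ powersetCard n univ, ∑ x ∈ univ \ B, weight S t x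
      = (Fintype.card α - 1).choose n * (Fintype.card α + (t - 1) * #S) := by
  rw [sum_powersetCard_sum_sdiff, sum_weight, card_univ, univ_inter, nsmul_eq_mul]

end Weight

variable {α : Type*} [Fintype α] [DecidableEq α]

theorem antivaryOn_pow_card_inter_sum_compl_weight (S : Finset α) {t : ℝ} (ht : 1 ≤ t)
    (n : ℕ) :
    AntivaryOn (fun B => t ^ #(B ∩ S)) (fun B => ∑ x ∈ univ \ B, weight S t x)
      ↑(powersetCard n (univ : Finset α)) := by
  intro B hB B' hB' hlt
  simp only [sum_compl_weight S t hB, sum_compl_weight S t hB'] at hlt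
  have hcard : #(B' ∩ S) ≤ #(B ∩ S) := by
    by_contra! h
    have : (t - 1) * #(B ∩ S) ≤ (t - 1) * #(B' ∩ S) := by gcongr
    linarith
  exact pow_le_pow_right₀ ht hcard

/-- The inductive step is Chebyshev's sum inequality for the antivarying pair above. -/
theorem sum_pow_card_inter_le (S : Finset α) {t : ℝ} (ht : 1 ≤ t) {n : ℕ}
    (hn : n ≤ Fintype.card α) :
    ∑ B ∈ powersetCard n univ, t ^ #(B ∩ S)
      ≤ (Fintype.card α).choose n * (1 + (t - 1) * #S / Fintype.card α) ^ n := by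
  induction n with
  | zero => simp
  | succ n ih =>
    set N := Fintype.card α
    set c := 1 + (t - 1) * #S / N
    obtain ⟨M, hM⟩ : ∃ M, N = M + 1 := ⟨N - 1, by omega⟩
    have hN : (N : ℝ) ≠ 0 := by rw [hM]; positivity
    have hchoose : (0 : ℝ) < N.choose n := by exact_mod_cast Nat.choose_pos (by omega)
    have hpascal : (N : ℝ) * (N - 1).choose n = N.choose (n + 1) * (n + 1) := by
      rw [hM, Nat.add_sub_cancel]
      exact_mod_cast Nat.add_one_mul_choose_eq M n
    have key : N.choose n * ((n + 1) * ∑ B ∈ powersetCard (n + 1) univ, t ^ #(B ∩ S))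
        ≤ N.choose n * ((n + 1) * (N.choose (n + 1) * c ^ (n + 1))) :=
      calc _ ≤ (∑ B ∈ powersetCard n univ, t ^ #(B ∩ S))
              * ∑ B ∈ powersetCard n univ, ∑ x ∈ univ \ B, weight S t x := by
            rw [succ_mul_sum_pow_card_inter]
            simpa [card_powersetCard] using
              (antivaryOn_pow_card_inter_sum_compl_weight S ht n).card_mul_sum_le_sum_mul_sum
        _ ≤ N.choose n * c ^ n * ((N - 1).choose n * (N * c)) := by
            have hW : (N : ℝ) + (t - 1) * #S = N * c := by simp only [c]; field_simp
            rw [sum_powersetCard_sum_compl_weight, hW]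
            gcongr
            exact ih (by omega)
        _ = _ := by linear_combination (↑(N.choose n) * c ^ (n + 1)) * hpascal
    exact le_of_mul_le_mul_left (le_of_mul_le_mul_left key hchoose) (by positivity)

theorem card_filter_mul_rpow_le_sum_pow_card_inter (S : Finset α) {t : ℝ} (ht : 1 ≤ t) (a : ℝ)
    (n : ℕ) :
    #{B ∈ powersetCard n univ | a ≤ #(B ∩ S)} * t ^ a
      ≤ ∑ B ∈ powersetCard n univ, t ^ #(B ∩ S) :=
  calc _ = ∑ B ∈ powersetCard n univ with a ≤ #(B ∩ S), t ^ a := by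
        rw [sum_const, nsmul_eq_mul]
    _ ≤ ∑ B ∈ powersetCard n univ with a ≤ #(B ∩ S), t ^ #(B ∩ S) := by
        refine sum_le_sum fun B hB => ?_
        rw [← rpow_natCast]
        exact rpow_le_rpow_of_exponent_le ht (mem_filter.mp hB).2
    _ ≤ ∑ B ∈ powersetCard n univ, t ^ #(B ∩ S) :=
        sum_le_sum_of_subset_of_nonneg (filter_subset _ _) fun _ _ _ => by positivity

theorem rpow_le_card_mul_of_dominating {Θ : Finset (Finset α)} {D : ℕ} (hΘ : ∀ θ ∈ Θ, #θ = D)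
    (hD : D ≤ Fintype.card α) {t a : ℝ} (ht : 1 ≤ t)
    (hcover : ∀ B ∈ powersetCard D univ, ∃ θ ∈ Θ, a ≤ #(B ∩ θ)) :
    t ^ a ≤ #Θ * (1 + (t - 1) * D / Fintype.card α) ^ D := by
  set ball := fun θ : Finset α => {B ∈ powersetCard D (univ : Finset α) | a ≤ #(B ∩ θ)}
  have hcount : (Fintype.card α).choose D ≤ ∑ θ ∈ Θ, #(ball θ) := by
    rw [← card_univ, ← card_powersetCard]
    refine (card_le_card fun B hB => ?_).trans card_biUnion_le
    obtain ⟨θ, hθ, hBθ⟩ := hcover B hB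
    exact mem_biUnion.mpr ⟨θ, hθ, mem_filter.mpr ⟨hB, hBθ⟩⟩
  have hball (θ) (hθ : θ ∈ Θ) : (#(ball θ) : ℝ) * t ^ a
      ≤ (Fintype.card α).choose D * (1 + (t - 1) * D / Fintype.card α) ^ D := by
    have h := sum_pow_card_inter_le θ ht hD
    rw [hΘ θ hθ] at h
    exact (card_filter_mul_rpow_le_sum_pow_card_inter θ ht a D).trans h
  refine le_of_mul_le_mul_left ?_ (show (0 : ℝ) < (Fintype.card α).choose D by
    exact_mod_cast Nat.choose_pos hD)
  calc _ ≤ (∑ θ ∈ Θ, (#(ball θ) : ℝ)) * t ^ a := by gcongr; exact_mod_cast hcount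
    _ ≤ ∑ θ ∈ Θ, ((Fintype.card α).choose D * (1 + (t - 1) * D / Fintype.card α) ^ D : ℝ) := by
        rw [sum_mul]; exact sum_le_sum hball
    _ = _ := by rw [sum_const, nsmul_eq_mul]; ring

theorem le_log_card_of_dominating {Θ : Finset (Finset α)} {D : ℕ} (hΘ : ∀ θ ∈ Θ, #θ = D)
    (hD : 0 < D) (hDN : D ≤ Fintype.card α) {a : ℝ} (haD : (D : ℝ) ≤ a * Fintype.card α)
    (hcover : ∀ B ∈ powersetCard D univ, ∃ θ ∈ Θ, a * D ≤ #(B ∩ θ)) :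
    D * (a * log (a * Fintype.card α / D) - a + D / Fintype.card α) ≤ log #Θ := by
  set N := Fintype.card α
  set t := a * N / D
  have hD' : (0 : ℝ) < D := by exact_mod_cast hD
  have hN : (0 : ℝ) < N := by exact_mod_cast hD.trans_le hDN
  have ht : 1 ≤ t := (one_le_div hD').mpr haD
  have hc : 1 + (t - 1) * D / N = 1 + a - D / N := by simp only [t]; field_simp; ring
  have hc0 : 0 < 1 + a - D / N := by
    have : (D : ℝ) / N ≤ a := (div_le_iff₀ hN).mpr haD
    linarith
  have h := rpow_le_card_mul_of_dominating hΘ hDN ht hcover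
  rw [hc] at h
  have hΘ0 : (0 : ℝ) < #Θ :=
    pos_of_mul_pos_left ((rpow_pos_of_pos (by linarith) (a * D)).trans_le h) (by positivity)
  have hlog := log_le_log (rpow_pos_of_pos (by linarith) _) h
  rw [log_rpow (by linarith), log_mul hΘ0.ne' (by positivity), log_pow] at hlog
  nlinarith [log_le_sub_one_of_pos hc0]

theorem exists_packing_le_log_card {D : ℕ} (hD : 0 < D) {a : ℝ} (ha : a ≤ 1)
    (haD : (D : ℝ) ≤ a * Fintype.card α) :
    ∃ Θ : Finset (Finset α), (∀ θ ∈ Θ, #θ = D) ∧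
      (Θ : Set (Finset α)).Pairwise (fun A B => #(A ∩ B) < a * D) ∧
      D * (a * log (a * Fintype.card α / D) - a + D / Fintype.card α) ≤ log #Θ := by
  have hDN : D ≤ Fintype.card α := by
    have : (D : ℝ) ≤ Fintype.card α := haD.trans (by nlinarith [hD])
    exact_mod_cast this
  obtain ⟨Θ, hΘsub, hΘfar, hΘcover⟩ :=
    (powersetCard D (univ : Finset α)).exists_subset_pairwise_not_rel_and_dominating
      (r := fun A B => a * D ≤ #(A ∩ B))
      (fun A hA => by rw [inter_self, (mem_powersetCard.mp hA).2]; nlinarith)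
      (fun A B h => by rwa [inter_comm])
  have hΘcard (θ) (hθ : θ ∈ Θ) : #θ = D := (mem_powersetCard.mp (hΘsub hθ)).2
  exact ⟨Θ, hΘcard, fun A hA B hB hAB => not_le.mp (hΘfar hA hB hAB),
    le_log_card_of_dominating hΘcard hD hDN haD hΘcover⟩

theorem rate_mul_log_inv_le {α β p : ℝ} (hα : α ∈ Set.Ioo (0 : ℝ) 1) (hβ : β ∈ Set.Ioo (0 : ℝ) 1)
    (hp : 0 < p) (hpαβ : p ≤ α * β) :
    α / (-log (α * β)) * (-log β + β - 1) * log p⁻¹ ≤ α * log (α / p) - α + p := by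
  obtain ⟨hα0, hα1⟩ := hα
  obtain ⟨hβ0, hβ1⟩ := hβ
  have hαβ : 0 < α * β := mul_pos hα0 hβ0
  set u := -log (α * β) with hu_def
  have hu : 0 < u := neg_pos.mpr (log_neg hαβ (by nlinarith))
  have huL : u ≤ -log p := neg_le_neg (log_le_log hp hpαβ)
  have hlogαβ : log (α * β) = log α + log β := log_mul hα0.ne' hβ0.ne'
  have hrate : α / u * (-log β + β - 1) ≤ α * (1 - β) := by
    rw [div_mul_eq_mul_div, div_le_iff₀ hu]
    have : (1 - β) * (-log β) ≤ (1 - β) * u := by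
      gcongr; linarith [log_neg hα0 hα1]
    nlinarith [self_sub_one_le_mul_log hβ0.le]
  -- the tangent line of `exp` at `-u`, where `exp (-u) = α β`
  have htangent : α * β * (1 - (-log p - u)) ≤ p := by
    have h : α * β * exp (u - -log p) = p := by
      rw [show u - -log p = log p - log (α * β) by ring, exp_sub, exp_log hp, exp_log hαβ]
      field_simp
    nlinarith [add_one_le_exp (u - -log p)]
  have hvalue : α / u * (-log β + β - 1) * u = α * log α + α * u - α + α * β := by
    field_simp
    rw [hu_def, hlogαβ]; ring
  rw [log_inv, log_div hα0.ne' hp.ne']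
  nlinarith [mul_le_mul_of_nonneg_right hrate (sub_nonneg.mpr huL)]

section Hamming

variable {ι : Type*} [DecidableEq ι]

def boolIndicator (B : Finset ι) : ι → Bool := fun i => decide (i ∈ B)

theorem boolIndicator_injective : Function.Injective (boolIndicator (ι := ι)) := by
  intro A B h
  ext i
  simpa [boolIndicator] using congrFun h i

variable [Fintype ι]

theorem hammingDist_false_boolIndicator (B : Finset ι) :
    hammingDist (fun _ => false) (boolIndicator B) = #B := by
  simp [hammingDist, boolIndicator]

theorem hammingDist_boolIndicator_of_card_eq {A B : Finset ι} {D : ℕ} (hA : #A = D)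
    (hB : #B = D) :
    (hammingDist (boolIndicator A) (boolIndicator B) : ℝ) = 2 * D - 2 * #(A ∩ B) := by
  have h : hammingDist (boolIndicator A) (boolIndicator B) = #((A ∪ B) \ (A ∩ B)) := by
    unfold hammingDist boolIndicator
    congr 1
    ext i
    by_cases hiA : i ∈ A <;> by_cases hiB : i ∈ B <;> simp [hiA, hiB]
  have hunion := card_union_add_card_inter A B
  have hle := card_le_card (inter_subset_union (s := A) (t := B))
  have hnat : hammingDist (boolIndicator A) (boolIndicator B) + 2 * #(A ∩ B) = D + D := by
    rw [h, card_sdiff_of_subset inter_subset_union]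
    omega
  have hreal : (hammingDist (boolIndicator A) (boolIndicator B) : ℝ) + 2 * #(A ∩ B) = D + D := by
    exact_mod_cast hnat
  linarith

end Hamming

end GilbertVarshamov

open GilbertVarshamov

theorem gilbert_varshamov_general (N D : ℕ) (hD1 : 1 ≤ D)
    (α β : ℝ) (hα : α ∈ Set.Ioo (0 : ℝ) 1) (hβ : β ∈ Set.Ioo (0 : ℝ) 1)
    (hDαβ : (D : ℝ) ≤ α * β * N) :
    ∃ Θ : Finset (Fin N → Bool),
      (∀ θ ∈ Θ, hammingDist (fun _ => false) θ = D) ∧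
      (∀ θ ∈ Θ, ∀ θ' ∈ Θ, θ ≠ θ' →
        (2 * (1 - α) * D : ℝ) < (hammingDist θ θ' : ℝ)) ∧
      (α / (-Real.log (α * β)) * (-Real.log β + β - 1)) * D * Real.log ((N : ℝ) / D)
        ≤ Real.log Θ.card := by
  have hD : (0 : ℝ) < D := by exact_mod_cast hD1
  have hN : (0 : ℝ) < N := by
    by_contra! h
    nlinarith [mul_pos hα.1 hβ.1]
  have hDα : (D : ℝ) ≤ α * N := hDαβ.trans (by nlinarith [mul_pos hα.1 hN, hβ.2])
  obtain ⟨Θ, hΘcard, hΘfar, hΘlog⟩ :=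
    exists_packing_le_log_card (α := Fin N) hD1 hα.2.le (by simpa using hDα)
  refine ⟨Θ.image boolIndicator, ?_, ?_, ?_⟩
  · simp only [forall_mem_image]
    exact fun θ hθ => (hammingDist_false_boolIndicator θ).trans (hΘcard θ hθ)
  · simp only [forall_mem_image]
    intro A hA B hB hAB
    rw [hammingDist_boolIndicator_of_card_eq (hΘcard A hA) (hΘcard B hB)]
    linarith [hΘfar hA hB (ne_of_apply_ne _ hAB)]
  · rw [card_image_of_injective _ boolIndicator_injective]
    have hrate := rate_mul_log_inv_le hα hβ (by positivity) ((div_le_iff₀ hN).mpr hDαβ)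
    rw [inv_div, div_div_eq_mul_div] at hrate
    simp only [Fintype.card_fin] at hΘlog
    calc _ = (D : ℝ) * (α / (-log (α * β)) * (-log β + β - 1) * log (N / D)) := by ring
      _ ≤ D * (α * log (α * N / D) - α + D / N) := by gcongr
      _ ≤ _ := hΘlog

/-- Gilbert–Varshamov-type bound, Massart Lemma 4.7: for `1 ≤ D < N` and
`α, β ∈ (0,1)` with `D ≤ αβN`, there is a subset `Θ` of the Hamming sphere of radius `D`
in `{0,1}^N` whose points are pairwise more than `2(1-α)D` apart and with
`ln |Θ| ≥ ρ D ln(N/D)` where `ρ = α(-ln β + β - 1)/(-ln(αβ))`. -/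
theorem gilbert_varshamov (N D : ℕ) (hN : 2 ≤ N) (hD1 : 1 ≤ D) (hDN : D < N)
    (α β : ℝ) (hα : α ∈ Set.Ioo (0 : ℝ) 1) (hβ : β ∈ Set.Ioo (0 : ℝ) 1)
    (hDαβ : (D : ℝ) ≤ α * β * N) :
    ∃ Θ : Finset (Fin N → Bool),
      (∀ θ ∈ Θ, hammingDist (fun _ => false) θ = D) ∧
      (∀ θ ∈ Θ, ∀ θ' ∈ Θ, θ ≠ θ' →
        (2 * (1 - α) * D : ℝ) < (hammingDist θ θ' : ℝ)) ∧
      (α / (-Real.log (α * β)) * (-Real.log β + β - 1)) * D * Real.log ((N : ℝ) / D)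
        ≤ Real.log Θ.card :=
  gilbert_varshamov_general N D hD1 α β hα hβ hDαβ
end

section
/- Let ε ∼ N(0,1), let μ̄ ∈ ℝ, σ̄ > 0, b ≥ 0, and define the soft-thresholding activation φ_b(x) = max(0, x−b) − max(0, −x−b). Then E[φ_b(μ̄ + σ̄ε)] = (μ̄ − b)(1 − Φ(−(μ̄−b)/σ̄)) + σ̄·(1/√(2π))·exp(−(μ̄−b)²/(2σ̄²)) + (μ̄ + b)(1 − Φ((μ̄+b)/σ̄)) − σ̄·(1/√(2π))·exp(−(μ̄+b)²/(2σ̄²)). -/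
open MeasureTheory ProbabilityTheory

/-- Soft-thresholding (LSA) activation `φ_b(x) = max(0, x-b) - max(0, -x-b)`. -/
noncomputable def lsa (b x : ℝ) : ℝ := max 0 (x - b) - max 0 (-x - b)

/-- Standard normal CDF. -/
noncomputable def stdNormalCDF (t : ℝ) : ℝ := (gaussianReal 0 1 (Set.Iic t)).toReal

/-!
Write `φ_b(μ + σε) = (μ - b + σε)⁺ - (-(μ + b) + σ(-ε))⁺`; since `-ε` is again standard normal,
both terms are expectations of a ramp `(m + σε)⁺ = (m + σε)·1{ε > -m/σ}`. Its expectation is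
`m·P(ε > -m/σ) + σ·E[ε; ε > -m/σ]`, and the truncated mean `E[ε; ε > t]` equals the density `φ(t)`
because `-φ` is an antiderivative of `x ↦ x φ(x)` vanishing at `+∞`.
-/

open Filter Topology Set Real
open scoped NNReal

section GaussianTruncatedMean

variable {μ : ℝ} {v : ℝ≥0}

lemma hasDerivAt_gaussianPDFReal (x : ℝ) :
    HasDerivAt (gaussianPDFReal μ v) (-((x - μ) / v) * gaussianPDFReal μ v x) x := by
  rw [gaussianPDFReal_def]
  refine (((((hasDerivAt_id' x).sub_const μ).pow 2).neg.div_const _).exp.const_mul _).congr_deriv ?_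
  simp only [Pi.pow_apply, Pi.neg_apply, Nat.cast_ofNat]
  ring

lemma tendsto_gaussianPDFReal_atTop (hv : v ≠ 0) :
    Tendsto (gaussianPDFReal μ v) atTop (𝓝 0) := by
  have hv' : (0 : ℝ) < 2 * v := by positivity
  have hsq : Tendsto (fun x => (x - μ) ^ 2) atTop atTop :=
    (tendsto_pow_atTop two_ne_zero).comp (tendsto_atTop_add_const_right _ _ tendsto_id)
  have := (tendsto_exp_atBot.comp ((tendsto_neg_atTop_atBot.comp hsq).atBot_div_const hv')).const_mul
    (√(2 * π * v))⁻¹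
  simpa [gaussianPDFReal_def, Function.comp_def] using this

lemma integrable_gaussianReal_iff (hv : v ≠ 0) {f : ℝ → ℝ} :
    Integrable f (gaussianReal μ v) ↔ Integrable fun x => gaussianPDFReal μ v x * f x := by
  rw [gaussianReal_of_var_ne_zero _ hv, integrable_withDensity_iff_integrable_smul'
    (measurable_gaussianPDF _ _) (ae_of_all _ fun _ => gaussianPDF_lt_top)]
  simp only [toReal_gaussianPDF, smul_eq_mul]

lemma setIntegral_gaussianReal_eq_setIntegral_mul (hv : v ≠ 0) (f : ℝ → ℝ) {s : Set ℝ}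
    (hs : MeasurableSet s) :
    ∫ x in s, f x ∂gaussianReal μ v = ∫ x in s, gaussianPDFReal μ v x * f x := by
  rw [gaussianReal_of_var_ne_zero _ hv, setIntegral_withDensity_eq_setIntegral_toReal_smul
    (measurable_gaussianPDF _ _) (ae_of_all _ fun _ => gaussianPDF_lt_top) _ hs]
  simp only [toReal_gaussianPDF, smul_eq_mul]

lemma setIntegral_Ioi_sub_gaussianReal (hv : v ≠ 0) (t : ℝ) :
    ∫ x in Ioi t, (x - μ) ∂gaussianReal μ v = v * gaussianPDFReal μ v t := by
  have hderiv : ∀ x ∈ Ioi t, HasDerivAt (fun y => -(v * gaussianPDFReal μ v y))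
      (gaussianPDFReal μ v x * (x - μ)) x := fun x _ => by
    refine ((hasDerivAt_gaussianPDFReal x).const_mul (v : ℝ)).neg.congr_deriv ?_
    field_simp [NNReal.coe_ne_zero.2 hv]
  have hint : Integrable fun x => gaussianPDFReal μ v x * (x - μ) :=
    (integrable_gaussianReal_iff hv).1 ((memLp_id_gaussianReal 1).integrable le_rfl |>.sub
      (integrable_const μ))
  have hlim : Tendsto (fun y => -(v * gaussianPDFReal μ v y)) atTop (𝓝 0) := by
    simpa using ((tendsto_gaussianPDFReal_atTop (μ := μ) hv).const_mul (v : ℝ)).neg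
  rw [setIntegral_gaussianReal_eq_setIntegral_mul hv _ measurableSet_Ioi,
    integral_Ioi_of_hasDerivAt_of_tendsto
      ((hasDerivAt_gaussianPDFReal t).continuousAt.const_mul _).neg.continuousWithinAt hderiv
      hint.integrableOn hlim]
  simp

end GaussianTruncatedMean

lemma integral_comp_neg_gaussianReal (v : ℝ≥0) (f : ℝ → ℝ) :
    ∫ x, f (-x) ∂gaussianReal 0 v = ∫ x, f x ∂gaussianReal 0 v := by
  conv_rhs => rw [← neg_zero, ← gaussianReal_map_neg]
  exact (integral_map_equiv (MeasurableEquiv.neg ℝ) f).symm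

lemma integrable_max_zero_affine_gaussianReal (μ : ℝ) (v : ℝ≥0) (m c : ℝ) :
    Integrable (fun x => max 0 (m + c * x)) (gaussianReal μ v) := by
  have hid : Integrable (fun x => x) (gaussianReal μ v) := (memLp_id_gaussianReal 1).integrable le_rfl
  exact ((integrable_const m).add (hid.const_mul c)).pos_part.congr
    (ae_of_all _ fun x => max_comm _ _)

lemma measureReal_Ioi_gaussianReal (t : ℝ) :
    (gaussianReal 0 1).real (Ioi t) = 1 - stdNormalCDF t := by
  rw [← compl_Iic, probReal_compl_eq_one_sub measurableSet_Iic, stdNormalCDF, measureReal_def]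

lemma integral_max_zero_affine_gaussianReal (m : ℝ) {c : ℝ} (hc : 0 < c) :
    ∫ x, max 0 (m + c * x) ∂gaussianReal 0 1
      = m * (1 - stdNormalCDF (-m / c)) + c * gaussianPDFReal 0 1 (-m / c) := by
  have hmax : (fun x => max 0 (m + c * x)) = (Ioi (-m / c)).indicator fun x => m + c * x := by
    ext x
    by_cases hx : x ∈ Ioi (-m / c)
    · rw [indicator_of_mem hx, max_eq_right]
      nlinarith [mem_Ioi.1 hx, div_mul_cancel₀ (-m) hc.ne']
    · rw [indicator_of_notMem hx, max_eq_left]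
      nlinarith [not_lt.1 (mem_Ioi.not.1 hx), div_mul_cancel₀ (-m) hc.ne']
  have hint : IntegrableOn (fun x => x) (Ioi (-m / c)) (gaussianReal 0 1) :=
    ((memLp_id_gaussianReal 1).integrable le_rfl).integrableOn
  have hmean : ∫ x in Ioi (-m / c), x ∂gaussianReal 0 1 = gaussianPDFReal 0 1 (-m / c) := by
    simpa using setIntegral_Ioi_sub_gaussianReal (μ := 0) one_ne_zero (-m / c)
  rw [hmax, integral_indicator measurableSet_Ioi, integral_add (integrable_const m).integrableOn
    (hint.const_mul c), setIntegral_const, integral_const_mul, hmean, measureReal_Ioi_gaussianReal,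
    smul_eq_mul, mul_comm]

lemma gaussianPDFReal_zero_one_div (m c : ℝ) :
    gaussianPDFReal 0 1 (m / c) = 1 / √(2 * π) * exp (-m ^ 2 / (2 * c ^ 2)) := by
  rw [gaussianPDFReal_def]
  simp only [NNReal.coe_one, mul_one, sub_zero, one_div]
  congr 2
  ring

lemma lsa_add_mul (μ σ b x : ℝ) :
    lsa b (μ + σ * x) = max 0 ((μ - b) + σ * x) - max 0 (-(μ + b) + σ * -x) := by
  unfold lsa
  ring_nf

theorem lsa_expectation_general (μ σ b : ℝ) (hσ : 0 < σ) :
    ∫ x, lsa b (μ + σ * x) ∂(gaussianReal 0 1) =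
      (μ - b) * (1 - stdNormalCDF (-(μ - b) / σ))
        + σ * (1 / Real.sqrt (2 * Real.pi)) * Real.exp (-(μ - b) ^ 2 / (2 * σ ^ 2))
        + (μ + b) * (1 - stdNormalCDF ((μ + b) / σ))
        - σ * (1 / Real.sqrt (2 * Real.pi)) * Real.exp (-(μ + b) ^ 2 / (2 * σ ^ 2)) := by
  have hint := integrable_max_zero_affine_gaussianReal 0 1 (-(μ + b)) (-σ)
  simp only [neg_mul, ← mul_neg] at hint
  simp_rw [lsa_add_mul]
  rw [integral_sub (integrable_max_zero_affine_gaussianReal 0 1 _ _) hint,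
    integral_comp_neg_gaussianReal 1 fun x => max 0 (-(μ + b) + σ * x),
    integral_max_zero_affine_gaussianReal _ hσ, integral_max_zero_affine_gaussianReal _ hσ,
    gaussianPDFReal_zero_one_div, gaussianPDFReal_zero_one_div, neg_neg, neg_sq]
  ring

/-- closed form for `E[φ_b(μ̄ + σ̄ ε)]` with `ε ∼ N(0,1)`. -/
theorem lsa_expectation (μ σ b : ℝ) (hσ : 0 < σ) (hb : 0 ≤ b) :
    ∫ x, lsa b (μ + σ * x) ∂(gaussianReal 0 1) =
      (μ - b) * (1 - stdNormalCDF (-(μ - b) / σ))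
        + σ * (1 / Real.sqrt (2 * Real.pi)) * Real.exp (-(μ - b) ^ 2 / (2 * σ ^ 2))
        + (μ + b) * (1 - stdNormalCDF ((μ + b) / σ))
        - σ * (1 / Real.sqrt (2 * Real.pi)) * Real.exp (-(μ + b) ^ 2 / (2 * σ ^ 2)) :=
  lsa_expectation_general μ σ b hσ
end

section
/- Let ε ∼ N(0,1), μ̄ ∈ ℝ, σ̄ > 0, and let φ_b(x) = max(0, x−b) − max(0, −x−b). Then sup over b ≥ 0 of E[φ_b(μ̄ + σ̄ε)] equals max(μ̄, 0). In particular, if μ̄ > 0 the supremum is attained at b = 0; if μ̄ < 0 the supremum is approached as b → ∞ and equals 0; if μ̄ = 0 the expectation is 0 for all b. -/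
/-!
Under a symmetric law of `ε`, the expectation of `φ_b(c + sε)` is the average of
`φ_b(c + sε)` and `φ_b(c - sε)`, and pointwise `φ_b(c + y) + φ_b(c - y) ≤ 2 max(c, 0)`
for `b ≥ 0`; so every expectation is at most `max(c, 0)`. For `c ≥ 0` the bound is
attained at `b = 0`, where `φ_0` is the identity and the expectation is the mean `c`.
For `c < 0` the expectations tend to `0` as `b → ∞` by dominated convergence, since
`|φ_b(x)| ≤ |x|` and `φ_b(x) = 0` once `b ≥ |x|`.
For `c = 0` the integrand is odd, so its expectation vanishes.
-/

open MeasureTheory ProbabilityTheory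

open Filter Topology

lemma lsa_zero (x : ℝ) : lsa 0 x = x := by
  simp only [lsa, sub_zero, max_def]; split_ifs <;> linarith

lemma lsa_neg (b x : ℝ) : lsa b (-x) = -lsa b x := by
  simp only [lsa, neg_neg]; ring

lemma abs_lsa_le {b : ℝ} (hb : 0 ≤ b) (x : ℝ) : |lsa b x| ≤ |x| := by
  rw [abs_le]
  rcases abs_cases x with ⟨hx, _⟩ | ⟨hx, _⟩ <;>
    rw [hx] <;> simp only [lsa, max_def] <;> constructor <;> split_ifs <;> linarith

lemma lsa_of_abs_le {b x : ℝ} (h : |x| ≤ b) : lsa b x = 0 := by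
  obtain ⟨h₁, h₂⟩ := abs_le.mp h
  rw [lsa, max_eq_left (by linarith), max_eq_left (by linarith), sub_zero]

lemma lsa_add_add_lsa_sub_le {b : ℝ} (hb : 0 ≤ b) (c y : ℝ) :
    lsa b (c + y) + lsa b (c - y) ≤ 2 * max c 0 := by
  simp only [lsa, max_def]; split_ifs <;> linarith

lemma continuous_lsa (b : ℝ) : Continuous (lsa b) := by unfold lsa; fun_prop

instance isNegInvariant_gaussianReal (v : NNReal) : (gaussianReal 0 v).IsNegInvariant :=
  ⟨by rw [Measure.neg_def, gaussianReal_map_neg, neg_zero]⟩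

section AnyMeasure

variable {ν : Measure ℝ} {f : ℝ → ℝ}

lemma integrable_lsa_comp {b : ℝ} (hb : 0 ≤ b) (hf : Integrable f ν) :
    Integrable (fun x => lsa b (f x)) ν :=
  hf.abs.mono' ((continuous_lsa b).comp_aestronglyMeasurable hf.1)
    (ae_of_all _ fun x => by simpa only [Real.norm_eq_abs] using abs_lsa_le hb (f x))

lemma tendsto_integral_lsa_comp_atTop (hf : Integrable f ν) :
    Tendsto (fun b => ∫ x, lsa b (f x) ∂ν) atTop (𝓝 0) := by
  rw [← integral_zero ℝ ℝ]
  refine tendsto_integral_filter_of_dominated_convergence (fun x => |f x|)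
    (Eventually.of_forall fun b => (continuous_lsa b).comp_aestronglyMeasurable hf.1) ?_ hf.abs
    (ae_of_all _ fun x => tendsto_const_nhds.congr' ?_)
  · filter_upwards [eventually_ge_atTop 0] with b hb
    exact ae_of_all _ fun x => by simpa only [Real.norm_eq_abs] using abs_lsa_le hb (f x)
  · filter_upwards [eventually_ge_atTop |f x|] with b hb
    exact (lsa_of_abs_le hb).symm

end AnyMeasure

section SymmetricMeasure

variable {ν : Measure ℝ} [ν.IsNegInvariant]

lemma integral_eq_zero_of_odd {g : ℝ → ℝ} (hg : ∀ x, g (-x) = -g x) :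
    ∫ x, g x ∂ν = 0 := by
  have h := integral_neg_eq_self g ν
  simp only [hg, integral_neg] at h
  linarith

lemma integral_lsa_mul_eq_zero (b s : ℝ) : ∫ x, lsa b (s * x) ∂ν = 0 :=
  integral_eq_zero_of_odd fun x => by rw [mul_neg, lsa_neg]

variable [IsProbabilityMeasure ν] (hν : Integrable (fun x => x) ν)
include hν

lemma integral_lsa_zero_const_add_mul (c s : ℝ) : ∫ x, lsa 0 (c + s * x) ∂ν = c := by
  simp only [lsa_zero]
  rw [integral_add (integrable_const c) (hν.const_mul s), integral_const_mul,
    integral_eq_zero_of_odd (g := fun x => x) fun x => rfl]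
  simp

lemma integral_lsa_const_add_mul_le {b : ℝ} (hb : 0 ≤ b) (c s : ℝ) :
    ∫ x, lsa b (c + s * x) ∂ν ≤ max c 0 := by
  have hint : ∀ t : ℝ, Integrable (fun x => lsa b (c + t * x)) ν := fun t =>
    integrable_lsa_comp hb ((integrable_const c).add (hν.const_mul t))
  have hflip : ∫ x, lsa b (c + s * x) ∂ν = ∫ x, lsa b (c + -s * x) ∂ν := by
    rw [← integral_neg_eq_self]; simp only [mul_neg, neg_mul]
  have hsum : ∫ x, (lsa b (c + s * x) + lsa b (c + -s * x)) ∂ν ≤ ∫ _, 2 * max c 0 ∂ν :=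
    integral_mono ((hint s).add (hint (-s))) (integrable_const _) fun x => by
      simpa only [neg_mul, ← sub_eq_add_neg] using lsa_add_add_lsa_sub_le hb c (s * x)
  rw [integral_add (hint s) (hint (-s)), ← hflip, integral_const] at hsum
  simp only [probReal_univ, one_smul] at hsum
  linarith

lemma sSup_integral_lsa_const_add_mul (c s : ℝ) :
    sSup ((fun b => ∫ x, lsa b (c + s * x) ∂ν) '' Set.Ici 0) = max c 0 := by
  have hle : ∀ y ∈ (fun b => ∫ x, lsa b (c + s * x) ∂ν) '' Set.Ici 0, y ≤ max c 0 := by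
    rintro y ⟨b, hb, rfl⟩
    exact integral_lsa_const_add_mul_le hν hb c s
  rcases le_or_gt 0 c with hc | hc
  · refine IsGreatest.csSup_eq ⟨⟨0, Set.self_mem_Ici, ?_⟩, hle⟩
    exact (integral_lsa_zero_const_add_mul hν c s).trans (max_eq_left hc).symm
  · refine IsLUB.csSup_eq ⟨hle, fun M hM => ?_⟩ ⟨_, 0, Set.self_mem_Ici, rfl⟩
    rw [max_eq_right hc.le]
    refine le_of_tendsto
      (tendsto_integral_lsa_comp_atTop ((integrable_const c).add (hν.const_mul s))) ?_
    filter_upwards [eventually_ge_atTop 0] with b hb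
    exact hM ⟨b, hb, rfl⟩

end SymmetricMeasure

theorem lsa_expectation_sup_general (μ σ : ℝ) :
    sSup ((fun b => ∫ x, lsa b (μ + σ * x) ∂(gaussianReal 0 1)) '' Set.Ici 0) = max μ 0 ∧
    (0 < μ → ∫ x, lsa 0 (μ + σ * x) ∂(gaussianReal 0 1) = max μ 0) ∧
    (μ < 0 → Filter.Tendsto (fun b => ∫ x, lsa b (μ + σ * x) ∂(gaussianReal 0 1))
      Filter.atTop (nhds 0)) ∧
    (μ = 0 → ∀ b : ℝ, 0 ≤ b → ∫ x, lsa b (μ + σ * x) ∂(gaussianReal 0 1) = 0) := by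
  have hid : Integrable (fun x => x) (gaussianReal 0 1) :=
    (memLp_id_gaussianReal 1).integrable le_rfl
  refine ⟨sSup_integral_lsa_const_add_mul hid μ σ, fun hμ => ?_, fun _ => ?_, ?_⟩
  · rw [integral_lsa_zero_const_add_mul hid, max_eq_left hμ.le]
  · exact tendsto_integral_lsa_comp_atTop ((integrable_const μ).add (hid.const_mul σ))
  · rintro rfl b -
    simpa only [zero_add] using integral_lsa_mul_eq_zero b σ

/-- `sup_{b ≥ 0} E[φ_b(μ̄ + σ̄ ε)] = max(μ̄, 0)`; attained at `b = 0` if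
`μ̄ > 0`, approached as `b → ∞` (limit `0`) if `μ̄ < 0`, and identically `0` if `μ̄ = 0`. -/
theorem lsa_expectation_sup (μ σ : ℝ) (hσ : 0 < σ) :
    sSup ((fun b => ∫ x, lsa b (μ + σ * x) ∂(gaussianReal 0 1)) '' Set.Ici 0) = max μ 0 ∧
    (0 < μ → ∫ x, lsa 0 (μ + σ * x) ∂(gaussianReal 0 1) = max μ 0) ∧
    (μ < 0 → Filter.Tendsto (fun b => ∫ x, lsa b (μ + σ * x) ∂(gaussianReal 0 1))
      Filter.atTop (nhds 0)) ∧
    (μ = 0 → ∀ b : ℝ, 0 ≤ b → ∫ x, lsa b (μ + σ * x) ∂(gaussianReal 0 1) = 0) :=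
  lsa_expectation_sup_general μ σ
end

section
/- Under the separation condition of the LCN lower bound: let ρ(f, g_U) = (1 − max(0, ‖w_1‖ cos α_1))² where cos α_1 = ⟨w_1, U^{(1)} w*⟩/‖w_1‖, and suppose the 'hard instance' set Ũ satisfies ⟨U^{(1)} w*, V^{(1)} w*⟩ < 10^{-3} for all distinct U, V ∈ Ũ. Then for any f with ‖w_1‖ ≤ 1 and any distinct U, V ∈ Ũ: ρ(f, g_U) < 10^{-2} implies ρ(f, g_V) > 10^{-2}. -/
/-- separation condition of the LCN lower bound: with
`ρ(f, g_U) = (1 - max(0, ⟨w₁, U⁽¹⁾w*⟩))²` (`= (1 - max(0, ‖w₁‖ cos α₁))²`), if the hard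
instance directions `a = U⁽¹⁾w*` and `b = V⁽¹⁾w*` satisfy `⟨a, b⟩ < 10⁻³`, then for any `f`
with `‖w₁‖ ≤ 1`: `ρ(f, g_U) < 10⁻²` implies `ρ(f, g_V) > 10⁻²`. -/
theorem rho_separation {d : ℕ} (a b : EuclideanSpace ℝ (Fin d))
    (ha : ‖a‖ = 1) (hb : ‖b‖ = 1)
    (hab : inner (𝕜 := ℝ) a b < 1 / 1000)
    (w₁ : EuclideanSpace ℝ (Fin d)) (hw : ‖w₁‖ ≤ 1)
    (h : (1 - max 0 (inner (𝕜 := ℝ) w₁ a)) ^ 2 < 1 / 100) :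
    (1 / 100 : ℝ) < (1 - max 0 (inner (𝕜 := ℝ) w₁ b)) ^ 2 := by
  set t : ℝ := inner (𝕜 := ℝ) w₁ a with ht
  set s : ℝ := inner (𝕜 := ℝ) w₁ b with hs
  have hm : max 0 t > 9/10 := by
    nlinarith [le_max_left (0:ℝ) t, sq_nonneg (1 - max 0 t)]
  have htpos : t > 9/10 := by
    rcases max_choice (0:ℝ) t with hc | hc <;> linarith [hm, hc ▸ hm]
  set u : EuclideanSpace ℝ (Fin d) := w₁ - t • a with hu
  have hua : inner (𝕜 := ℝ) u a = 0 := by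
    rw [hu, inner_sub_left, real_inner_smul_left]
    have : inner (𝕜 := ℝ) a a = 1 := by
      rw [real_inner_self_eq_norm_sq, ha]; norm_num
    rw [this]; ring
  have hnormu : ‖u‖^2 = ‖w₁‖^2 - t^2 := by
    have h0 : ‖u‖^2 = inner (𝕜 := ℝ) u u := (real_inner_self_eq_norm_sq u).symm
    have haa : inner (𝕜 := ℝ) a a = 1 := by
      rw [real_inner_self_eq_norm_sq, ha]; norm_num
    have hw2 : inner (𝕜 := ℝ) w₁ w₁ = ‖w₁‖^2 := real_inner_self_eq_norm_sq w₁
    have haw : inner (𝕜 := ℝ) a w₁ = t := (real_inner_comm a w₁).symm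
    rw [h0, hu]
    simp only [inner_sub_left, inner_sub_right, real_inner_smul_left,
      real_inner_smul_right, haa, hw2, haw]
    ring
  have hw1 : ‖w₁‖^2 ≤ 1 := by nlinarith [norm_nonneg w₁]
  have hu2 : ‖u‖^2 ≤ 1 - t^2 := by linarith [hnormu]
  have hub : ‖u‖ ≤ 44/100 := by
    nlinarith [norm_nonneg u]
  have ht1 : t ≤ 1 := by
    calc t ≤ ‖w₁‖ * ‖a‖ := real_inner_le_norm w₁ a
    _ ≤ 1 := by rw [ha]; simpa using hw
  have hsub : inner (𝕜 := ℝ) u b ≤ ‖u‖ := by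
    calc inner (𝕜 := ℝ) u b ≤ ‖u‖ * ‖b‖ := real_inner_le_norm u b
    _ = ‖u‖ := by rw [hb, mul_one]
  have hsdecomp : s = t * inner (𝕜 := ℝ) a b + inner (𝕜 := ℝ) u b := by
    rw [hu, inner_sub_left, real_inner_smul_left]; ring
  have hsle : s ≤ 441/1000 := by
    have : t * inner (𝕜 := ℝ) a b ≤ 1/1000 := by
      nlinarith
    linarith [hsdecomp, hsub, hub]
  have hmaxs : max 0 s ≤ 441/1000 := max_le (by norm_num) hsle
  nlinarith [hmaxs, le_max_left (0:ℝ) s]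
end
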